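/- arXiv:1512.00507 — 8 statements merged into one kernel-verified Lean document; each statement's English description precedes it below -/
import Mathlib

section
/- For all integers i and j, ⌊a(i,j)/3⌋ + ⌊a(i−1,j+2)/3⌋ = ⌊a(i−1,j+1)/3⌋ + ⌊a(i,j+1)/3⌋ + χ(i − j ≡ 1 mod 3). -/
/-- `a(i,j) = i² + ij + j² + 1 + i + 2j` -/
def a (i j : ℤ) : ℤ := i^2 + i*j + j^2 + 1 + i + 2*j

/-- `b(i,j) = i² + ij + j² + 1 + 2i + j` -/
def b (i j : ℤ) : ℤ := i^2 + i*j + j^2 + 1 + 2*i + j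

/-- `c(i,j) = i² + ij + j² + 1` -/
def c (i j : ℤ) : ℤ := i^2 + i*j + j^2 + 1

/-- For all integers `i`, `j`:
`⌊a(i,j)/3⌋ + ⌊a(i−1,j+2)/3⌋ = ⌊a(i−1,j+1)/3⌋ + ⌊a(i,j+1)/3⌋ + χ(i − j ≡ 1 mod 3)`.
Note that `Int` division by the positive integer `3` is floor division. -/
theorem stmt_0 (i j : ℤ) :
    a i j / 3 + a (i-1) (j+2) / 3
      = a (i-1) (j+1) / 3 + a i (j+1) / 3 + (if (i - j) % 3 = 1 then 1 else 0) := by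
  obtain ⟨k, d, ⟨hd1, hd2⟩, rfl⟩ : ∃ k d, (0 ≤ d ∧ d < 3) ∧ i = j + 3*k + d :=
    ⟨(i-j)/3, (i-j)%3, by omega, by omega⟩
  interval_cases d
  · have hA : a (j+3*k+0) j = 3*(k + 3*k^2 + j + 3*j*k + j^2) + 1 := by unfold a; ring
    have hB : a (j+3*k+0-1) (j+2) = 3*(2 + k + 3*k^2 + 2*j + 3*j*k + j^2) + 1 := by
      unfold a; ring
    have hC : a (j+3*k+0-1) (j+1) = 3*(1 + 3*k^2 + j + 3*j*k + j^2) := by unfold a; ring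
    have hD : a (j+3*k+0) (j+1) = 3*(1 + 2*k + 3*k^2 + 2*j + 3*j*k + j^2) + 1 := by
      unfold a; ring
    rw [hA, hB, hC, hD]; split_ifs <;> omega
  · have hA : a (j+3*k+1) j = 3*(1 + 3*k + 3*k^2 + 2*j + 3*j*k + j^2) := by unfold a; ring
    have hB : a (j+3*k+1-1) (j+2) = 3*(3 + 3*k + 3*k^2 + 3*j + 3*j*k + j^2) := by
      unfold a; ring
    have hC : a (j+3*k+1-1) (j+1) = 3*(1 + 2*k + 3*k^2 + 2*j + 3*j*k + j^2) + 1 := by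
      unfold a; ring
    have hD : a (j+3*k+1) (j+1) = 3*(2 + 4*k + 3*k^2 + 3*j + 3*j*k + j^2) + 1 := by
      unfold a; ring
    rw [hA, hB, hC, hD]; split_ifs <;> omega
  · have hA : a (j+3*k+2) j = 3*(2 + 5*k + 3*k^2 + 3*j + 3*j*k + j^2) + 1 := by unfold a; ring
    have hB : a (j+3*k+2-1) (j+2) = 3*(4 + 5*k + 3*k^2 + 4*j + 3*j*k + j^2) + 1 := by
      unfold a; ring
    have hC : a (j+3*k+2-1) (j+1) = 3*(2 + 4*k + 3*k^2 + 3*j + 3*j*k + j^2) + 1 := by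
      unfold a; ring
    have hD : a (j+3*k+2) (j+1) = 3*(4 + 6*k + 3*k^2 + 4*j + 3*j*k + j^2) := by
      unfold a; ring
    rw [hA, hB, hC, hD]; split_ifs <;> omega
end

section
/- For all integers i and j, ⌊b(i,j)/3⌋ + ⌊b(i−1,j+2)/3⌋ = ⌊b(i−1,j+1)/3⌋ + ⌊b(i,j+1)/3⌋ + χ(i − j ≡ 2 mod 3). -/
lemma div3_key (x P e : ℤ) (h : x = e + P * 3) (h0 : 0 ≤ e) (h1 : e < 3) :
    x / 3 = P := by
  subst h
  rw [Int.add_mul_ediv_right _ _ (by norm_num : (3:ℤ) ≠ 0)]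
  omega

/-- For all integers `i`, `j`:
`⌊b(i,j)/3⌋ + ⌊b(i−1,j+2)/3⌋ = ⌊b(i−1,j+1)/3⌋ + ⌊b(i,j+1)/3⌋ + χ(i − j ≡ 2 mod 3)`. -/
theorem stmt_1 (i j : ℤ) :
    b i j / 3 + b (i-1) (j+2) / 3
      = b (i-1) (j+1) / 3 + b i (j+1) / 3 + (if (i - j) % 3 = 2 then 1 else 0) := by
  have hr : (i - j) % 3 = 0 ∨ (i - j) % 3 = 1 ∨ (i - j) % 3 = 2 := by omega
  rcases hr with h | h | h
  · obtain ⟨k, hj⟩ : ∃ k, j = i - 3*k := ⟨(i-j)/3, by omega⟩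
    subst hj
    rw [div3_key _ (-k + 3*k^2 + i - 3*i*k + i^2) 1 (by unfold b; ring) (by norm_num) (by norm_num),
        div3_key _ (1 - 4*k + 3*k^2 + 2*i - 3*i*k + i^2) 1 (by unfold b; ring) (by norm_num) (by norm_num),
        div3_key _ (-2*k + 3*k^2 + i - 3*i*k + i^2) 1 (by unfold b; ring) (by norm_num) (by norm_num),
        div3_key _ (1 - 3*k + 3*k^2 + 2*i - 3*i*k + i^2) 0 (by unfold b; ring) (by norm_num) (by norm_num),
        if_neg (by omega)]
    ring
  · obtain ⟨k, hj⟩ : ∃ k, j = i - 3*k - 1 := ⟨(i-j)/3, by omega⟩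
    subst hj
    rw [div3_key _ (k + 3*k^2 - 3*i*k + i^2) 1 (by unfold b; ring) (by norm_num) (by norm_num),
        div3_key _ (-2*k + 3*k^2 + i - 3*i*k + i^2) 1 (by unfold b; ring) (by norm_num) (by norm_num),
        div3_key _ (3*k^2 - 3*i*k + i^2) 0 (by unfold b; ring) (by norm_num) (by norm_num),
        div3_key _ (-k + 3*k^2 + i - 3*i*k + i^2) 1 (by unfold b; ring) (by norm_num) (by norm_num),
        if_neg (by omega)]
    ring
  · obtain ⟨k, hj⟩ : ∃ k, j = i - 3*k - 2 := ⟨(i-j)/3, by omega⟩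
    subst hj
    rw [div3_key _ (1 + 3*k + 3*k^2 - i - 3*i*k + i^2) 0 (by unfold b; ring) (by norm_num) (by norm_num),
        div3_key _ (3*k^2 - 3*i*k + i^2) 0 (by unfold b; ring) (by norm_num) (by norm_num),
        div3_key _ (2*k + 3*k^2 - i - 3*i*k + i^2) 1 (by unfold b; ring) (by norm_num) (by norm_num),
        div3_key _ (k + 3*k^2 - 3*i*k + i^2) 1 (by unfold b; ring) (by norm_num) (by norm_num),
        if_pos (by omega)]
    ring
end

section
/- For all integers i and j, ⌊c(i,j)/3⌋ + ⌊c(i−1,j+2)/3⌋ = ⌊c(i−1,j+1)/3⌋ + ⌊c(i,j+1)/3⌋ + χ(i − j ≡ 0 mod 3). -/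
lemma key1 (q : ℤ) : (3*q + 1) / 3 = q := by omega
lemma key2 (q : ℤ) : (3*q + 2) / 3 = q := by omega

/-- For all integers `i`, `j`:
`⌊c(i,j)/3⌋ + ⌊c(i−1,j+2)/3⌋ = ⌊c(i−1,j+1)/3⌋ + ⌊c(i,j+1)/3⌋ + χ(i − j ≡ 0 mod 3)`. -/
theorem stmt_2 (i j : ℤ) :
    c i j / 3 + c (i-1) (j+2) / 3
      = c (i-1) (j+1) / 3 + c i (j+1) / 3 + (if (i - j) % 3 = 0 then 1 else 0) := by
  rcases (show (i-j)%3 = 0 ∨ (i-j)%3 = 1 ∨ (i-j)%3 = 2 by omega) with h|h|h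
  · obtain ⟨k, hk⟩ : ∃ k, i = j + 3*k := ⟨(i-j)/3, by omega⟩
    subst hk
    rw [if_pos (by omega),
      show c (j + 3*k) j = 3*(3*k^2 + (j+3*k)*j) + 1 by unfold c; ring,
      show c (j + 3*k - 1) (j+2) = 3*(3*(k-1)^2 + (j+3*k-1)*(j+2)) + 1 by unfold c; ring,
      show c (j + 3*k - 1) (j+1) = 3*(3*k^2 - 4*k + 1 + (j+3*k-1)*(j+1)) + 2 by unfold c; ring,
      show c (j + 3*k) (j+1) = 3*(3*k^2 - 2*k + (j+3*k)*(j+1)) + 2 by unfold c; ring,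
      key1, key1, key2, key2]
    ring
  · obtain ⟨k, hk⟩ : ∃ k, i = j + 3*k + 1 := ⟨(i-j)/3, by omega⟩
    subst hk
    rw [if_neg (by omega),
      show c (j + 3*k + 1) j = 3*(3*k^2 + 2*k + (j+3*k+1)*j) + 2 by unfold c; ring,
      show c (j + 3*k + 1 - 1) (j+2) = 3*(3*k^2 - 4*k + 1 + (j+3*k)*(j+2)) + 2 by unfold c; ring,
      show c (j + 3*k + 1 - 1) (j+1) = 3*(3*k^2 - 2*k + (j+3*k)*(j+1)) + 2 by unfold c; ring,
      show c (j + 3*k + 1) (j+1) = 3*(3*k^2 + (j+3*k+1)*(j+1)) + 1 by unfold c; ring,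
      key1, key2, key2, key2]
    ring
  · obtain ⟨k, hk⟩ : ∃ k, i = j + 3*k + 2 := ⟨(i-j)/3, by omega⟩
    subst hk
    rw [if_neg (by omega),
      show c (j + 3*k + 2) j = 3*(3*k^2 + 4*k + 1 + (j+3*k+2)*j) + 2 by unfold c; ring,
      show c (j + 3*k + 2 - 1) (j+2) = 3*(3*k^2 - 2*k + (j+3*k+1)*(j+2)) + 2 by unfold c; ring,
      show c (j + 3*k + 2 - 1) (j+1) = 3*(3*k^2 + (j+3*k+1)*(j+1)) + 1 by unfold c; ring,
      show c (j + 3*k + 2) (j+1) = 3*(3*k^2 + 2*k + (j+3*k+2)*(j+1)) + 2 by unfold c; ring,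
      key1, key2, key2, key2]
    ring
end

section
/- For all integers i and j, ⌊b(i−1,j+1)/3⌋ + ⌊b(i+1,j)/3⌋ = ⌊b(i,j)/3⌋ + ⌊b(i,j+1)/3⌋ + χ(i − j ≡ 1 mod 3). -/
/-- For all integers `i`, `j`:
`⌊b(i−1,j+1)/3⌋ + ⌊b(i+1,j)/3⌋ = ⌊b(i,j)/3⌋ + ⌊b(i,j+1)/3⌋ + χ(i − j ≡ 1 mod 3)`. -/
theorem stmt_5 (i j : ℤ) :
    b (i-1) (j+1) / 3 + b (i+1) j / 3
      = b i j / 3 + b i (j+1) / 3 + (if (i - j) % 3 = 1 then 1 else 0) := by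
  have h1 : b (i-1) (j+1) = b i j + (j - i) := by unfold b; ring
  have h2 : b (i+1) j = b i j + (2*i + j + 3) := by unfold b; ring
  have h3 : b i (j+1) = b i j + (i + 2*j + 2) := by unfold b; ring
  have h4 : b i j = (i-j)*(i-j) + 3*(i*j) + 1 + 2*i + j := by unfold b; ring
  have h5 : (i-j)*(i-j) % 3 = ((i-j)%3 * ((i-j)%3)) % 3 := by rw [Int.mul_emod]
  rw [h1, h2, h3]
  generalize hD : (i-j)*(i-j) = D at h4 h5
  generalize hP : i*j = P at h4
  generalize hB : b i j = n at *
  have h6 : (i-j) % 3 = 0 ∨ (i-j)%3 = 1 ∨ (i-j)%3 = 2 := by omega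
  rcases h6 with h|h|h <;> rw [h] at h5 ⊢ <;> simp <;> omega
end

section
/- For all integers i and j, ⌊c(i,j+1)/3⌋ + ⌊c(i−1,j)/3⌋ = ⌊c(i,j)/3⌋ + ⌊c(i−1,j+1)/3⌋ + χ(i − j ≡ 1 mod 3). -/
/-- For all integers `i`, `j`:
`⌊c(i,j+1)/3⌋ + ⌊c(i−1,j)/3⌋ = ⌊c(i,j)/3⌋ + ⌊c(i−1,j+1)/3⌋ + χ(i − j ≡ 1 mod 3)`. -/
theorem stmt_6 (i j : ℤ) :
    c i (j+1) / 3 + c (i-1) j / 3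
      = c i j / 3 + c (i-1) (j+1) / 3 + (if (i - j) % 3 = 1 then 1 else 0) := by
  have h1 : c i (j+1) = c i j + i + 2*j + 1 := by simp [c]; ring
  have h2 : c (i-1) j = c i j - 2*i - j + 1 := by simp [c]; ring
  have h3 : c (i-1) (j+1) = c i j - i + j + 1 := by simp [c]; ring
  rcases (show (i - j) % 3 = 0 ∨ (i - j) % 3 = 1 ∨ (i - j) % 3 = 2 by omega) with h | h | h
  · obtain ⟨k, hk⟩ : ∃ k, i = j + 3*k := ⟨(i-j)/3, by omega⟩
    have hm : c i j % 3 = 1 := by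
      have : c i j = 3*(3*k^2 + 3*j*k + j^2) + 1 := by subst hk; simp [c]; ring
      omega
    omega
  · obtain ⟨k, hk⟩ : ∃ k, i = j + 3*k + 1 := ⟨(i-j)/3, by omega⟩
    have hm : c i j % 3 = 2 := by
      have : c i j = 3*(3*k^2 + 3*j*k + j^2 + j + 2*k) + 2 := by subst hk; simp [c]; ring
      omega
    omega
  · obtain ⟨k, hk⟩ : ∃ k, i = j + 3*k + 2 := ⟨(i-j)/3, by omega⟩
    have hm : c i j % 3 = 2 := by
      have : c i j = 3*(3*k^2 + 3*j*k + j^2 + 2*j + 4*k + 1) + 2 := by subst hk; simp [c]; ring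
      omega
    omega
end

section
/- The map Z : ℤ³ → F is injective; that is, if Z(i,j,k) = Z(i′,j′,k′) in F then i = i′, j = j′, and k = k′. -/
noncomputable section

open MvPolynomial

/-- The field `F = ℚ(x₁,…,x₆)` of rational functions in six indeterminates over `ℚ`. -/
abbrev F : Type := FractionRing (MvPolynomial (Fin 6) ℚ)

/-- The indeterminate `x_{r+1}` as an element of `F` (so `x 0 = x₁, …, x 5 = x₆`). -/
def x (r : Fin 6) : F := algebraMap (MvPolynomial (Fin 6) ℚ) F (X r)

/-- `A = (x₃x₅+x₄x₆)/(x₁x₂)` -/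
def A : F := (x 2 * x 4 + x 3 * x 5) / (x 0 * x 1)

/-- `B = (x₁x₆+x₂x₅)/(x₃x₄)` -/
def B : F := (x 0 * x 5 + x 1 * x 4) / (x 2 * x 3)

/-- `C = (x₁x₃+x₂x₄)/(x₅x₆)` -/
def C : F := (x 0 * x 2 + x 1 * x 3) / (x 4 * x 5)

/-- `D = (x₁x₃x₆+x₂x₃x₅+x₂x₄x₆)/(x₁x₄x₅)` -/
def D : F := (x 0 * x 2 * x 5 + x 1 * x 2 * x 4 + x 1 * x 3 * x 5) / (x 0 * x 3 * x 4)

/-- `E = (x₂x₄x₅+x₁x₃x₅+x₁x₄x₆)/(x₂x₃x₆)` -/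
def E : F := (x 1 * x 3 * x 4 + x 0 * x 2 * x 4 + x 0 * x 3 * x 5) / (x 1 * x 2 * x 5)

/-- The initial cluster variable `x_{r(i,j,k)}` determined by `2(i−j)+3k mod 6`:
`r = 1` if `≡ 5`, `r = 2` if `≡ 2`, `r = 3` if `≡ 4`, `r = 4` if `≡ 1`,
`r = 5` if `≡ 3`, and `r = 6` if `≡ 0 (mod 6)`. -/
def xr (i j k : ℤ) : F :=
  if (2*(i-j) + 3*k) % 6 = 5 then x 0
  else if (2*(i-j) + 3*k) % 6 = 2 then x 1
  else if (2*(i-j) + 3*k) % 6 = 4 then x 2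
  else if (2*(i-j) + 3*k) % 6 = 1 then x 3
  else if (2*(i-j) + 3*k) % 6 = 3 then x 4
  else x 5

/-- `Z(i,j,k) = x_{r(i,j,k)} · A^{⌊a(i,j)/3⌋} · B^{⌊b(i,j)/3⌋} · C^{⌊c(i,j)/3⌋} ·
D^{⌊(k−1)²/4⌋} · E^{⌊k²/4⌋}`.  (Note `Int` division by a positive integer is floor
division.) -/
def Z (i j k : ℤ) : F :=
  xr i j k * A ^ (a i j / 3) * B ^ (b i j / 3) * C ^ (c i j / 3)
    * D ^ ((k-1)^2 / 4) * E ^ (k^2 / 4)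

/-!
Specialising `x_r ↦ t` and every other variable to `1` turns the numerator and the denominator
of `Z(i,j,k)` into nonzero polynomials in `t`; the difference of their degrees is the weight of
`Z(i,j,k)` in `x_r`, and `Z(i,j,k) = Z(i',j',k')` forces all six weights to agree. The weight
vector is the unit vector of `x_{r(i,j,k)}` plus the exponents of `A, …, E` times fixed vectors.
Those of `A, B, C` are constant on the pairs `{x₁, x₂}, {x₃, x₄}, {x₅, x₆}`, so differences within
the pairs see only the unit vector and `⌊k²/4⌋ - ⌊(k-1)²/4⌋ = ⌊k/2⌋`; this recovers `k` and `r`.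
The remaining weights give `⌊a/3⌋, ⌊b/3⌋, ⌊c/3⌋`, and together with `i - j mod 3`, read off
from `r`, they determine `a, b, c`, hence `i + 2j = a - c` and `2i + j = b - c`.
-/

theorem Polynomial.natDegree_prod_pow {ι R : Type*} [CommSemiring R] [NoZeroDivisors R]
    (s : Finset ι) (f : ι → Polynomial R) (n : ι → ℕ) (h : ∀ i ∈ s, f i ≠ 0) :
    (∏ i ∈ s, f i ^ n i).natDegree = ∑ i ∈ s, n i * (f i).natDegree := by
  rw [Polynomial.natDegree_prod _ _ fun i hi => pow_ne_zero _ (h i hi)]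
  simp only [Polynomial.natDegree_pow]

theorem IsFractionRing.mul_eq_mul_of_div_eq_div {R K : Type*} [CommRing R] [Field K]
    [Algebra R K] [IsFractionRing R K] {p q p' q' : R} (hq : q ≠ 0) (hq' : q' ≠ 0)
    (h : algebraMap R K p / algebraMap R K q = algebraMap R K p' / algebraMap R K q') :
    p * q' = p' * q := by
  have hinj := IsFractionRing.injective R K
  rw [div_eq_div_iff ((map_ne_zero_iff _ hinj).mpr hq) ((map_ne_zero_iff _ hinj).mpr hq'),
    ← map_mul, ← map_mul] at h
  exact hinj h

theorem Int.sq_ediv_four_sub_sub_one_sq_ediv_four (k : ℤ) :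
    k ^ 2 / 4 - (k - 1) ^ 2 / 4 = k / 2 := by
  rcases Int.even_or_odd' k with ⟨t, rfl | rfl⟩
  · rw [show (2 * t - 1) ^ 2 = 4 * (t ^ 2 - t) + 1 by ring, show (2 * t) ^ 2 = 4 * t ^ 2 by ring]
    omega
  · rw [show (2 * t + 1 - 1) ^ 2 = 4 * t ^ 2 by ring,
      show (2 * t + 1) ^ 2 = 4 * (t ^ 2 + t) + 1 by ring]
    omega

namespace Z

local notation "R" => MvPolynomial (Fin 6) ℚ

def genNum : Fin 5 → R :=
  ![X 2 * X 4 + X 3 * X 5, X 0 * X 5 + X 1 * X 4, X 0 * X 2 + X 1 * X 3,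
    X 0 * X 2 * X 5 + X 1 * X 2 * X 4 + X 1 * X 3 * X 5,
    X 1 * X 3 * X 4 + X 0 * X 2 * X 4 + X 0 * X 3 * X 5]

def genDen : Fin 5 → R :=
  ![X 0 * X 1, X 2 * X 3, X 4 * X 5, X 0 * X 3 * X 4, X 1 * X 2 * X 5]

lemma gen_eq_div (m : Fin 5) :
    ![A, B, C, D, E] m = algebraMap R F (genNum m) / algebraMap R F (genDen m) := by
  fin_cases m <;> simp [genNum, genDen, A, B, _root_.C, D, E, x]

def genWeight : Fin 5 → Fin 6 → ℤ :=
  ![![-1, -1, 1, 1, 1, 1], ![1, 1, -1, -1, 1, 1], ![1, 1, 1, 1, -1, -1],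
    ![0, 1, 1, 0, 0, 1], ![1, 0, 0, 1, 1, 0]]

def specAt (r : Fin 6) : R →+* Polynomial ℚ :=
  (aeval fun s => if s = r then Polynomial.X else 1).toRingHom

lemma evalRingHom_one_comp_specAt (r : Fin 6) :
    (Polynomial.evalRingHom 1).comp (specAt r) = MvPolynomial.eval 1 := by
  ext s
  · simp [specAt]
  · by_cases h : s = r <;> simp [specAt, h]

lemma specAt_ne_zero_of_eval_one_ne_zero {p : R} (r : Fin 6) (hp : MvPolynomial.eval 1 p ≠ 0) :
    specAt r p ≠ 0 := by
  rw [← evalRingHom_one_comp_specAt r] at hp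
  exact fun h => hp (by simp [h])

lemma natDegree_specAt_X (r s : Fin 6) :
    (specAt r (X s)).natDegree = if r = s then 1 else 0 := by
  by_cases h : r = s <;> simp [specAt, h, Ne.symm]

lemma natDegree_specAt_genNum_sub_genDen (m : Fin 5) (r : Fin 6) :
    ((specAt r (genNum m)).natDegree : ℤ) - (specAt r (genDen m)).natDegree = genWeight m r := by
  fin_cases m <;> fin_cases r <;>
    simp [specAt, genNum, genDen, genWeight, sub_eq_zero] <;> compute_degree!

lemma eval_one_genNum_ne_zero (m : Fin 5) : MvPolynomial.eval 1 (genNum m) ≠ 0 := by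
  fin_cases m <;> norm_num [genNum]

lemma eval_one_genDen_ne_zero (m : Fin 5) : MvPolynomial.eval 1 (genDen m) ≠ 0 := by
  fin_cases m <;> simp [genDen]

def rIndex (i j k : ℤ) : Fin 6 :=
  if (2*(i-j) + 3*k) % 6 = 5 then 0
  else if (2*(i-j) + 3*k) % 6 = 2 then 1
  else if (2*(i-j) + 3*k) % 6 = 4 then 2
  else if (2*(i-j) + 3*k) % 6 = 1 then 3
  else if (2*(i-j) + 3*k) % 6 = 3 then 4
  else 5

def residue : Fin 6 → ℤ := ![5, 2, 4, 1, 3, 0]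

lemma xr_eq (i j k : ℤ) : xr i j k = x (rIndex i j k) := by
  unfold xr rIndex; split_ifs <;> rfl

lemma residue_rIndex (i j k : ℤ) : residue (rIndex i j k) = (2*(i-j) + 3*k) % 6 := by
  unfold rIndex; split_ifs <;> simp only [residue, Fin.isValue, Matrix.cons_val] <;> omega

lemma sub_modEq_of_rIndex_eq {i j i' j' k : ℤ} (h : rIndex i j k = rIndex i' j' k) :
    i - j ≡ i' - j' [ZMOD 3] := by
  have h6 := congrArg residue h
  rw [residue_rIndex, residue_rIndex] at h6
  unfold Int.ModEq
  omega

lemma a_nonneg (i j : ℤ) : 0 ≤ a i j := by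
  unfold a; nlinarith [sq_nonneg (2*i+j+1), sq_nonneg (j+1)]

lemma b_nonneg (i j : ℤ) : 0 ≤ b i j := by
  unfold b; nlinarith [sq_nonneg (i+2*j+1), sq_nonneg (i+1)]

lemma c_nonneg (i j : ℤ) : 0 ≤ c i j := by
  unfold c; nlinarith [sq_nonneg (2*i+j), sq_nonneg j]

def exponent (i j k : ℤ) : Fin 5 → ℤ :=
  ![a i j / 3, b i j / 3, c i j / 3, (k-1)^2 / 4, k^2 / 4]

lemma exponent_nonneg (i j k : ℤ) (m : Fin 5) : 0 ≤ exponent i j k m := by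
  fin_cases m <;> refine Int.ediv_nonneg ?_ (by norm_num)
  exacts [a_nonneg i j, b_nonneg i j, c_nonneg i j, sq_nonneg _, sq_nonneg _]

lemma Z_eq_prod (i j k : ℤ) :
    Z i j k = x (rIndex i j k) * ∏ m, ![A, B, C, D, E] m ^ exponent i j k m := by
  rw [Z, xr_eq, Fin.prod_univ_five]
  simp only [mul_assoc]
  rfl

def num (i j k : ℤ) : R := X (rIndex i j k) * ∏ m, genNum m ^ (exponent i j k m).toNat

def den (i j k : ℤ) : R := ∏ m, genDen m ^ (exponent i j k m).toNat

lemma Z_eq_div (i j k : ℤ) :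
    Z i j k = algebraMap R F (num i j k) / algebraMap R F (den i j k) := by
  have hpow (m : Fin 5) : ![A, B, C, D, E] m ^ exponent i j k m
      = (algebraMap R F (genNum m) / algebraMap R F (genDen m)) ^ (exponent i j k m).toNat := by
    rw [← gen_eq_div, ← zpow_natCast, Int.toNat_of_nonneg (exponent_nonneg i j k m)]
  simp only [Z_eq_prod, hpow, num, den, map_mul, map_prod, map_pow, div_pow,
    Finset.prod_div_distrib, mul_div_assoc, x]

lemma eval_one_num_ne_zero (i j k : ℤ) : MvPolynomial.eval 1 (num i j k) ≠ 0 := by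
  simp only [num, map_mul, map_prod, map_pow, eval_X, Pi.one_apply, one_mul]
  exact Finset.prod_ne_zero_iff.mpr fun m _ => pow_ne_zero _ (eval_one_genNum_ne_zero m)

lemma eval_one_den_ne_zero (i j k : ℤ) : MvPolynomial.eval 1 (den i j k) ≠ 0 := by
  simp only [den, map_prod, map_pow]
  exact Finset.prod_ne_zero_iff.mpr fun m _ => pow_ne_zero _ (eval_one_genDen_ne_zero m)

def weight (i j k : ℤ) : Fin 6 → ℤ :=
  Pi.single (rIndex i j k) 1 + ∑ m, exponent i j k m • genWeight m

lemma natDegree_specAt_num_sub_den (i j k : ℤ) (r : Fin 6) :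
    ((specAt r (num i j k)).natDegree : ℤ) - (specAt r (den i j k)).natDegree
      = weight i j k r := by
  have hX : specAt r (X (rIndex i j k)) ≠ 0 := specAt_ne_zero_of_eval_one_ne_zero r (by simp)
  have hNum (m : Fin 5) (_ : m ∈ Finset.univ) :=
    specAt_ne_zero_of_eval_one_ne_zero r (eval_one_genNum_ne_zero m)
  have hDen (m : Fin 5) (_ : m ∈ Finset.univ) :=
    specAt_ne_zero_of_eval_one_ne_zero r (eval_one_genDen_ne_zero m)
  simp only [num, den, map_mul, map_prod, map_pow]
  rw [Polynomial.natDegree_mul hX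
      (Finset.prod_ne_zero_iff.mpr fun m hm => pow_ne_zero _ (hNum m hm)),
    Polynomial.natDegree_prod_pow _ _ _ hNum, Polynomial.natDegree_prod_pow _ _ _ hDen]
  push_cast
  rw [natDegree_specAt_X, add_sub_assoc, ← Finset.sum_sub_distrib]
  simp only [Nat.cast_ite, Nat.cast_one, Nat.cast_zero, weight, Pi.add_apply, Finset.sum_apply,
    Pi.smul_apply, smul_eq_mul, Pi.single_apply, ← mul_sub, natDegree_specAt_genNum_sub_genDen,
    Int.toNat_of_nonneg (exponent_nonneg i j k _)]

lemma weight_eq_of_Z_eq {i j k i' j' k' : ℤ} (h : Z i j k = Z i' j' k') :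
    weight i j k = weight i' j' k' := by
  have hden (i j k : ℤ) : den i j k ≠ 0 :=
    fun h0 => eval_one_den_ne_zero i j k (by rw [h0, map_zero])
  rw [Z_eq_div, Z_eq_div] at h
  have hcross := IsFractionRing.mul_eq_mul_of_div_eq_div (hden i j k) (hden i' j' k') h
  funext r
  have hdeg := congrArg (fun p => (specAt r p).natDegree) hcross
  simp only [map_mul] at hdeg
  rw [Polynomial.natDegree_mul (specAt_ne_zero_of_eval_one_ne_zero r (eval_one_num_ne_zero i j k))
      (specAt_ne_zero_of_eval_one_ne_zero r (eval_one_den_ne_zero i' j' k')),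
    Polynomial.natDegree_mul
      (specAt_ne_zero_of_eval_one_ne_zero r (eval_one_num_ne_zero i' j' k'))
      (specAt_ne_zero_of_eval_one_ne_zero r (eval_one_den_ne_zero i j k))] at hdeg
  rw [← natDegree_specAt_num_sub_den, ← natDegree_specAt_num_sub_den]
  omega

-- The middle pair is reversed so that `D` and `E` shift all three entries by the same amount.
def pairDiff (w : Fin 6 → ℤ) : Fin 3 → ℤ := ![w 0 - w 1, w 3 - w 2, w 4 - w 5]

lemma pairDiff_weight (i j k : ℤ) :
    pairDiff (weight i j k) = pairDiff (Pi.single (rIndex i j k) 1) + fun _ => k / 2 := by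
  have hk := Int.sq_ediv_four_sub_sub_one_sq_ediv_four k
  funext n
  fin_cases n <;> simp only [pairDiff, Fin.zero_eta, Fin.mk_one, Fin.reduceFinMk, weight, exponent, genWeight, Fin.sum_univ_five, Pi.add_apply, Pi.smul_apply, smul_eq_mul, Matrix.cons_val_zero, Matrix.cons_val_one, Matrix.cons_val] <;> omega

lemma sum_pairDiff_single (ρ : Fin 6) :
    ∑ n, pairDiff (Pi.single ρ 1) n = 2 * (residue ρ % 2) - 1 := by
  fin_cases ρ <;> decide

lemma pairDiff_single_injective :
    Function.Injective fun ρ : Fin 6 => pairDiff (Pi.single ρ 1) := by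
  decide

lemma k_eq_of_weight_eq {i j k i' j' k' : ℤ} (h : weight i j k = weight i' j' k') : k = k' := by
  have hsum (i j k : ℤ) : ∑ n, pairDiff (weight i j k) n = 2 * (k % 2) - 1 + 3 * (k / 2) := by
    have hpar : residue (rIndex i j k) % 2 = k % 2 := by rw [residue_rIndex]; omega
    simp only [pairDiff_weight, Pi.add_apply, Finset.sum_add_distrib, sum_pairDiff_single, hpar,
      Finset.sum_const, Finset.card_univ, Fintype.card_fin]
    ring
  have := hsum i j k
  rw [h, hsum] at this
  omega

lemma rIndex_eq_of_weight_eq {i j k i' j' : ℤ} (h : weight i j k = weight i' j' k) :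
    rIndex i j k = rIndex i' j' k :=
  pairDiff_single_injective (by simpa [pairDiff_weight] using congrArg pairDiff h)

lemma ediv_three_eq_of_weight_eq {i j k i' j' : ℤ} (h : weight i j k = weight i' j' k)
    (hr : rIndex i j k = rIndex i' j' k) :
    a i j / 3 = a i' j' / 3 ∧ b i j / 3 = b i' j' / 3 ∧ c i j / 3 = c i' j' / 3 := by
  have h0 := congrFun h 0
  have h2 := congrFun h 2
  have h4 := congrFun h 4
  simp only [hr, weight, exponent, genWeight, Fin.sum_univ_five, Pi.add_apply, Pi.smul_apply, smul_eq_mul, Matrix.cons_val_zero, Matrix.cons_val_one, Matrix.cons_val] at h0 h2 h4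
  omega

lemma c_modEq (i j : ℤ) : c i j ≡ (i - j) ^ 2 + 1 [ZMOD 3] :=
  Int.modEq_iff_dvd.mpr ⟨-(i * j), by unfold c; ring⟩

lemma eq_of_ediv_three_eq {i j i' j' : ℤ} (hmod : i - j ≡ i' - j' [ZMOD 3])
    (ha : a i j / 3 = a i' j' / 3) (hb : b i j / 3 = b i' j' / 3)
    (hc : c i j / 3 = c i' j' / 3) :
    i = i' ∧ j = j' := by
  have hc3 : c i j % 3 = c i' j' % 3 := calc
    c i j ≡ (i - j) ^ 2 + 1 [ZMOD 3] := c_modEq i j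
    _ ≡ (i' - j') ^ 2 + 1 [ZMOD 3] := (hmod.pow 2).add_right 1
    _ ≡ c i' j' [ZMOD 3] := (c_modEq i' j').symm
  have ha' (i j : ℤ) : a i j = c i j + i + 2 * j := by unfold a c; ring
  have hb' (i j : ℤ) : b i j = c i j + 2 * i + j := by unfold b c; ring
  rw [ha', ha'] at ha
  rw [hb', hb'] at hb
  unfold Int.ModEq at hmod
  omega

end Z

/-- The map `Z : ℤ³ → F` is injective. -/
theorem stmt_11 (i j k i' j' k' : ℤ) (h : Z i j k = Z i' j' k') :
    i = i' ∧ j = j' ∧ k = k' := by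
  have hw := Z.weight_eq_of_Z_eq h
  obtain rfl := Z.k_eq_of_weight_eq hw
  have hr := Z.rIndex_eq_of_weight_eq hw
  obtain ⟨ha, hb, hc⟩ := Z.ediv_three_eq_of_weight_eq hw hr
  obtain ⟨rfl, rfl⟩ := Z.eq_of_ediv_three_eq (Z.sub_modEq_of_rIndex_eq hr) ha hb hc
  exact ⟨rfl, rfl, rfl⟩
end
end

section
/- For all integers i, j, k with i − j ≡ 1 (mod 3) and k even, the following identity holds in F: Z(i−1,j+2,k) · Z(i,j,k+1) = Z(i−1,j+1,k) · Z(i,j+1,k+1) + Z(i−1,j+1,k+1) · Z(i,j+1,k). -/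
set_option maxHeartbeats 1000000

noncomputable section

open MvPolynomial

private lemma div3 (s t r : ℤ) (h : s = 3*t + r) (h0 : 0 ≤ r) (h1 : r < 3) : s / 3 = t := by
  subst h; omega

private lemma div4 (s t r : ℤ) (h : s = 4*t + r) (h0 : 0 ≤ r) (h1 : r < 4) : s / 4 = t := by
  subst h; omega

private lemma comb (y : F) (hy : y ≠ 0) (e f g : ℤ) (h : e + f = g) : y^e * y^f = y^g := by
  rw [← h, zpow_add₀ hy]

private lemma xr5 (i j k : ℤ) (h : (2*(i-j) + 3*k) % 6 = 5) : xr i j k = x 0 := by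
  unfold xr; rw [h]; norm_num
private lemma xr2 (i j k : ℤ) (h : (2*(i-j) + 3*k) % 6 = 2) : xr i j k = x 1 := by
  unfold xr; rw [h]; norm_num
private lemma xr4 (i j k : ℤ) (h : (2*(i-j) + 3*k) % 6 = 4) : xr i j k = x 2 := by
  unfold xr; rw [h]; norm_num
private lemma xr1 (i j k : ℤ) (h : (2*(i-j) + 3*k) % 6 = 1) : xr i j k = x 3 := by
  unfold xr; rw [h]; norm_num
private lemma xr3 (i j k : ℤ) (h : (2*(i-j) + 3*k) % 6 = 3) : xr i j k = x 4 := by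
  unfold xr; rw [h]; norm_num
private lemma xr0 (i j k : ℤ) (h : (2*(i-j) + 3*k) % 6 = 0) : xr i j k = x 5 := by
  unfold xr; rw [h]; norm_num

private lemma alg_ne (p : MvPolynomial (Fin 6) ℚ)
    (h : eval (fun _ => (1:ℚ)) p ≠ 0) : algebraMap (MvPolynomial (Fin 6) ℚ) F p ≠ 0 := by
  intro hp
  apply h
  have : p = 0 := by
    have := IsFractionRing.injective (MvPolynomial (Fin 6) ℚ) F
    exact this (by simpa using hp)
  simp [this]

private lemma hx (r : Fin 6) : x r ≠ 0 := alg_ne _ (by simp)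

private lemma hA : A ≠ 0 := by
  unfold A x
  rw [← map_mul, ← map_mul, ← map_add, ← map_mul]
  exact div_ne_zero (alg_ne _ (by simp; try norm_num)) (alg_ne _ (by simp; try norm_num))

private lemma hB : B ≠ 0 := by
  unfold B x
  rw [← map_mul, ← map_mul, ← map_add, ← map_mul]
  exact div_ne_zero (alg_ne _ (by simp; try norm_num)) (alg_ne _ (by simp; try norm_num))

private lemma hC : C ≠ 0 := by
  unfold _root_.C x
  rw [← map_mul, ← map_mul, ← map_add, ← map_mul]
  exact div_ne_zero (alg_ne _ (by simp; try norm_num)) (alg_ne _ (by simp; try norm_num))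

private lemma hD : D ≠ 0 := by
  unfold D x
  rw [← map_mul, ← map_mul, ← map_mul, ← map_mul, ← map_mul, ← map_mul,
    ← map_add, ← map_add, ← map_mul, ← map_mul]
  exact div_ne_zero (alg_ne _ (by simp; try norm_num)) (alg_ne _ (by simp; try norm_num))

private lemma hE : E ≠ 0 := by
  unfold E x
  rw [← map_mul, ← map_mul, ← map_mul, ← map_mul, ← map_mul, ← map_mul,
    ← map_add, ← map_add, ← map_mul, ← map_mul]
  exact div_ne_zero (alg_ne _ (by simp; try norm_num)) (alg_ne _ (by simp; try norm_num))

private lemma hkey : x 1 * x 0 * A = x 2 * x 4 + x 3 * x 5 := by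
  unfold A
  calc x 1 * x 0 * ((x 2 * x 4 + x 3 * x 5) / (x 0 * x 1))
      = (x 2 * x 4 + x 3 * x 5) * ((x 0 * x 1) / (x 0 * x 1)) := by ring
    _ = x 2 * x 4 + x 3 * x 5 := by
        rw [div_self (mul_ne_zero (hx 0) (hx 1)), mul_one]

/-- For `i − j ≡ 1 (mod 3)` and `k` even:
`Z(i−1,j+2,k)·Z(i,j,k+1) = Z(i−1,j+1,k)·Z(i,j+1,k+1) + Z(i−1,j+1,k+1)·Z(i,j+1,k)`. -/
theorem stmt_12 (i j k : ℤ) (h3 : (i - j) % 3 = 1) (h2 : Even k) :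
    Z (i-1) (j+2) k * Z i j (k+1)
      = Z (i-1) (j+1) k * Z i (j+1) (k+1) + Z (i-1) (j+1) (k+1) * Z i (j+1) k := by
  obtain ⟨m, hm⟩ : ∃ m, i = j + 3*m + 1 := ⟨(i-j-1)/3, by omega⟩
  obtain ⟨n, hn⟩ := h2
  subst hm hn
  have hZ1 : Z (j+3*m+1-1) (j+2) (n+n) = x 1 * A ^ ((j^2+3*m*j+j+3*m^2+2*m)+2*j+m+3) * B ^ ((j^2+3*m*j+j+3*m^2+2*m)+2*j+2*m+2) * C ^ ((j^2+3*m*j+j+3*m^2+2*m)+j+1) * D ^ (n^2-n) * E ^ (n^2) := by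
    unfold Z
    rw [xr2 _ _ _ (by omega),
      div3 _ _ _ (show a (j+3*m+1-1) (j+2) = 3*((j^2+3*m*j+j+3*m^2+2*m)+2*j+m+3) + 0 by unfold a; ring) (by norm_num) (by norm_num),
      div3 _ _ _ (show b (j+3*m+1-1) (j+2) = 3*((j^2+3*m*j+j+3*m^2+2*m)+2*j+2*m+2) + 1 by unfold b; ring) (by norm_num) (by norm_num),
      div3 _ _ _ (show c (j+3*m+1-1) (j+2) = 3*((j^2+3*m*j+j+3*m^2+2*m)+j+1) + 2 by unfold c; ring) (by norm_num) (by norm_num),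
      div4 _ _ _ (show ((n+n)-1)^2 = 4*(n^2-n) + 1 by ring) (by norm_num) (by norm_num),
      div4 _ _ _ (show ((n+n))^2 = 4*(n^2) + 0 by ring) (by norm_num) (by norm_num)]
  have hZ2 : Z (j+3*m+1) j (n+n+1) = x 0 * A ^ ((j^2+3*m*j+j+3*m^2+2*m)+j+m+1) * B ^ ((j^2+3*m*j+j+3*m^2+2*m)+j+2*m+1) * C ^ ((j^2+3*m*j+j+3*m^2+2*m)) * D ^ (n^2) * E ^ (n^2+n) := by
    unfold Z
    rw [xr5 _ _ _ (by omega),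
      div3 _ _ _ (show a (j+3*m+1) j = 3*((j^2+3*m*j+j+3*m^2+2*m)+j+m+1) + 0 by unfold a; ring) (by norm_num) (by norm_num),
      div3 _ _ _ (show b (j+3*m+1) j = 3*((j^2+3*m*j+j+3*m^2+2*m)+j+2*m+1) + 1 by unfold b; ring) (by norm_num) (by norm_num),
      div3 _ _ _ (show c (j+3*m+1) j = 3*((j^2+3*m*j+j+3*m^2+2*m)) + 2 by unfold c; ring) (by norm_num) (by norm_num),
      div4 _ _ _ (show ((n+n+1)-1)^2 = 4*(n^2) + 0 by ring) (by norm_num) (by norm_num),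
      div4 _ _ _ (show ((n+n+1))^2 = 4*(n^2+n) + 1 by ring) (by norm_num) (by norm_num)]
  have hZ3 : Z (j+3*m+1-1) (j+1) (n+n) = x 2 * A ^ ((j^2+3*m*j+j+3*m^2+2*m)+j+1) * B ^ ((j^2+3*m*j+j+3*m^2+2*m)+j+m+1) * C ^ ((j^2+3*m*j+j+3*m^2+2*m)-m) * D ^ (n^2-n) * E ^ (n^2) := by
    unfold Z
    rw [xr4 _ _ _ (by omega),
      div3 _ _ _ (show a (j+3*m+1-1) (j+1) = 3*((j^2+3*m*j+j+3*m^2+2*m)+j+1) + 1 by unfold a; ring) (by norm_num) (by norm_num),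
      div3 _ _ _ (show b (j+3*m+1-1) (j+1) = 3*((j^2+3*m*j+j+3*m^2+2*m)+j+m+1) + 0 by unfold b; ring) (by norm_num) (by norm_num),
      div3 _ _ _ (show c (j+3*m+1-1) (j+1) = 3*((j^2+3*m*j+j+3*m^2+2*m)-m) + 2 by unfold c; ring) (by norm_num) (by norm_num),
      div4 _ _ _ (show ((n+n)-1)^2 = 4*(n^2-n) + 1 by ring) (by norm_num) (by norm_num),
      div4 _ _ _ (show ((n+n))^2 = 4*(n^2) + 0 by ring) (by norm_num) (by norm_num)]
  have hZ4 : Z (j+3*m+1) (j+1) (n+n+1) = x 4 * A ^ ((j^2+3*m*j+j+3*m^2+2*m)+2*j+2*m+2) * B ^ ((j^2+3*m*j+j+3*m^2+2*m)+2*j+3*m+2) * C ^ ((j^2+3*m*j+j+3*m^2+2*m)+j+m+1) * D ^ (n^2) * E ^ (n^2+n) := by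
    unfold Z
    rw [xr3 _ _ _ (by omega),
      div3 _ _ _ (show a (j+3*m+1) (j+1) = 3*((j^2+3*m*j+j+3*m^2+2*m)+2*j+2*m+2) + 1 by unfold a; ring) (by norm_num) (by norm_num),
      div3 _ _ _ (show b (j+3*m+1) (j+1) = 3*((j^2+3*m*j+j+3*m^2+2*m)+2*j+3*m+2) + 1 by unfold b; ring) (by norm_num) (by norm_num),
      div3 _ _ _ (show c (j+3*m+1) (j+1) = 3*((j^2+3*m*j+j+3*m^2+2*m)+j+m+1) + 1 by unfold c; ring) (by norm_num) (by norm_num),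
      div4 _ _ _ (show ((n+n+1)-1)^2 = 4*(n^2) + 0 by ring) (by norm_num) (by norm_num),
      div4 _ _ _ (show ((n+n+1))^2 = 4*(n^2+n) + 1 by ring) (by norm_num) (by norm_num)]
  have hZ5 : Z (j+3*m+1-1) (j+1) (n+n+1) = x 3 * A ^ ((j^2+3*m*j+j+3*m^2+2*m)+j+1) * B ^ ((j^2+3*m*j+j+3*m^2+2*m)+j+m+1) * C ^ ((j^2+3*m*j+j+3*m^2+2*m)-m) * D ^ (n^2) * E ^ (n^2+n) := by
    unfold Z
    rw [xr1 _ _ _ (by omega),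
      div3 _ _ _ (show a (j+3*m+1-1) (j+1) = 3*((j^2+3*m*j+j+3*m^2+2*m)+j+1) + 1 by unfold a; ring) (by norm_num) (by norm_num),
      div3 _ _ _ (show b (j+3*m+1-1) (j+1) = 3*((j^2+3*m*j+j+3*m^2+2*m)+j+m+1) + 0 by unfold b; ring) (by norm_num) (by norm_num),
      div3 _ _ _ (show c (j+3*m+1-1) (j+1) = 3*((j^2+3*m*j+j+3*m^2+2*m)-m) + 2 by unfold c; ring) (by norm_num) (by norm_num),
      div4 _ _ _ (show ((n+n+1)-1)^2 = 4*(n^2) + 0 by ring) (by norm_num) (by norm_num),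
      div4 _ _ _ (show ((n+n+1))^2 = 4*(n^2+n) + 1 by ring) (by norm_num) (by norm_num)]
  have hZ6 : Z (j+3*m+1) (j+1) (n+n) = x 5 * A ^ ((j^2+3*m*j+j+3*m^2+2*m)+2*j+2*m+2) * B ^ ((j^2+3*m*j+j+3*m^2+2*m)+2*j+3*m+2) * C ^ ((j^2+3*m*j+j+3*m^2+2*m)+j+m+1) * D ^ (n^2-n) * E ^ (n^2) := by
    unfold Z
    rw [xr0 _ _ _ (by omega),
      div3 _ _ _ (show a (j+3*m+1) (j+1) = 3*((j^2+3*m*j+j+3*m^2+2*m)+2*j+2*m+2) + 1 by unfold a; ring) (by norm_num) (by norm_num),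
      div3 _ _ _ (show b (j+3*m+1) (j+1) = 3*((j^2+3*m*j+j+3*m^2+2*m)+2*j+3*m+2) + 1 by unfold b; ring) (by norm_num) (by norm_num),
      div3 _ _ _ (show c (j+3*m+1) (j+1) = 3*((j^2+3*m*j+j+3*m^2+2*m)+j+m+1) + 1 by unfold c; ring) (by norm_num) (by norm_num),
      div4 _ _ _ (show ((n+n)-1)^2 = 4*(n^2-n) + 1 by ring) (by norm_num) (by norm_num),
      div4 _ _ _ (show ((n+n))^2 = 4*(n^2) + 0 by ring) (by norm_num) (by norm_num)]
  rw [hZ1, hZ2, hZ3, hZ4, hZ5, hZ6]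
  have hL : x 1 * A ^ ((j^2+3*m*j+j+3*m^2+2*m)+2*j+m+3) * B ^ ((j^2+3*m*j+j+3*m^2+2*m)+2*j+2*m+2) * C ^ ((j^2+3*m*j+j+3*m^2+2*m)+j+1) * D ^ (n^2-n) * E ^ (n^2) * (x 0 * A ^ ((j^2+3*m*j+j+3*m^2+2*m)+j+m+1) * B ^ ((j^2+3*m*j+j+3*m^2+2*m)+j+2*m+1) * C ^ ((j^2+3*m*j+j+3*m^2+2*m)) * D ^ (n^2) * E ^ (n^2+n)) = A ^ (2*(j^2+3*m*j+j+3*m^2+2*m)+3*j+2*m+3) * B ^ (2*(j^2+3*m*j+j+3*m^2+2*m)+3*j+4*m+3) * C ^ (2*(j^2+3*m*j+j+3*m^2+2*m)+j+1) * D ^ (2*n^2-n) * E ^ (2*n^2+n) * (x 1 * x 0 * A) := by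
    calc x 1 * A ^ ((j^2+3*m*j+j+3*m^2+2*m)+2*j+m+3) * B ^ ((j^2+3*m*j+j+3*m^2+2*m)+2*j+2*m+2) * C ^ ((j^2+3*m*j+j+3*m^2+2*m)+j+1) * D ^ (n^2-n) * E ^ (n^2) * (x 0 * A ^ ((j^2+3*m*j+j+3*m^2+2*m)+j+m+1) * B ^ ((j^2+3*m*j+j+3*m^2+2*m)+j+2*m+1) * C ^ ((j^2+3*m*j+j+3*m^2+2*m)) * D ^ (n^2) * E ^ (n^2+n))
        = (A ^ ((j^2+3*m*j+j+3*m^2+2*m)+2*j+m+3) * A ^ ((j^2+3*m*j+j+3*m^2+2*m)+j+m+1)) * (B ^ ((j^2+3*m*j+j+3*m^2+2*m)+2*j+2*m+2) * B ^ ((j^2+3*m*j+j+3*m^2+2*m)+j+2*m+1)) * (C ^ ((j^2+3*m*j+j+3*m^2+2*m)+j+1) * C ^ ((j^2+3*m*j+j+3*m^2+2*m))) * (D ^ (n^2-n) * D ^ (n^2)) * (E ^ (n^2) * E ^ (n^2+n)) * (x 1 * x 0) := by ring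
      _ = A ^ ((2*(j^2+3*m*j+j+3*m^2+2*m)+3*j+2*m+3)+1) * B ^ (2*(j^2+3*m*j+j+3*m^2+2*m)+3*j+4*m+3) * C ^ (2*(j^2+3*m*j+j+3*m^2+2*m)+j+1) * D ^ (2*n^2-n) * E ^ (2*n^2+n) * (x 1 * x 0) := by
          rw [comb A hA _ _ _ (show ((j^2+3*m*j+j+3*m^2+2*m)+2*j+m+3) + ((j^2+3*m*j+j+3*m^2+2*m)+j+m+1) = (2*(j^2+3*m*j+j+3*m^2+2*m)+3*j+2*m+3)+1 by ring),
            comb B hB _ _ _ (show ((j^2+3*m*j+j+3*m^2+2*m)+2*j+2*m+2) + ((j^2+3*m*j+j+3*m^2+2*m)+j+2*m+1) = (2*(j^2+3*m*j+j+3*m^2+2*m)+3*j+4*m+3) by ring),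
            comb C hC _ _ _ (show ((j^2+3*m*j+j+3*m^2+2*m)+j+1) + ((j^2+3*m*j+j+3*m^2+2*m)) = (2*(j^2+3*m*j+j+3*m^2+2*m)+j+1) by ring),
            comb D hD _ _ _ (show (n^2-n) + (n^2) = (2*n^2-n) by ring),
            comb E hE _ _ _ (show (n^2) + (n^2+n) = (2*n^2+n) by ring)]
      _ = A ^ (2*(j^2+3*m*j+j+3*m^2+2*m)+3*j+2*m+3) * B ^ (2*(j^2+3*m*j+j+3*m^2+2*m)+3*j+4*m+3) * C ^ (2*(j^2+3*m*j+j+3*m^2+2*m)+j+1) * D ^ (2*n^2-n) * E ^ (2*n^2+n) * (x 1 * x 0 * A) := by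
          rw [zpow_add_one₀ hA]; ring
  have hR1 : x 2 * A ^ ((j^2+3*m*j+j+3*m^2+2*m)+j+1) * B ^ ((j^2+3*m*j+j+3*m^2+2*m)+j+m+1) * C ^ ((j^2+3*m*j+j+3*m^2+2*m)-m) * D ^ (n^2-n) * E ^ (n^2) * (x 4 * A ^ ((j^2+3*m*j+j+3*m^2+2*m)+2*j+2*m+2) * B ^ ((j^2+3*m*j+j+3*m^2+2*m)+2*j+3*m+2) * C ^ ((j^2+3*m*j+j+3*m^2+2*m)+j+m+1) * D ^ (n^2) * E ^ (n^2+n)) = A ^ (2*(j^2+3*m*j+j+3*m^2+2*m)+3*j+2*m+3) * B ^ (2*(j^2+3*m*j+j+3*m^2+2*m)+3*j+4*m+3) * C ^ (2*(j^2+3*m*j+j+3*m^2+2*m)+j+1) * D ^ (2*n^2-n) * E ^ (2*n^2+n) * (x 2 * x 4) := by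
    calc x 2 * A ^ ((j^2+3*m*j+j+3*m^2+2*m)+j+1) * B ^ ((j^2+3*m*j+j+3*m^2+2*m)+j+m+1) * C ^ ((j^2+3*m*j+j+3*m^2+2*m)-m) * D ^ (n^2-n) * E ^ (n^2) * (x 4 * A ^ ((j^2+3*m*j+j+3*m^2+2*m)+2*j+2*m+2) * B ^ ((j^2+3*m*j+j+3*m^2+2*m)+2*j+3*m+2) * C ^ ((j^2+3*m*j+j+3*m^2+2*m)+j+m+1) * D ^ (n^2) * E ^ (n^2+n))
        = (A ^ ((j^2+3*m*j+j+3*m^2+2*m)+j+1) * A ^ ((j^2+3*m*j+j+3*m^2+2*m)+2*j+2*m+2)) * (B ^ ((j^2+3*m*j+j+3*m^2+2*m)+j+m+1) * B ^ ((j^2+3*m*j+j+3*m^2+2*m)+2*j+3*m+2)) * (C ^ ((j^2+3*m*j+j+3*m^2+2*m)-m) * C ^ ((j^2+3*m*j+j+3*m^2+2*m)+j+m+1)) * (D ^ (n^2-n) * D ^ (n^2)) * (E ^ (n^2) * E ^ (n^2+n)) * (x 2 * x 4) := by ring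
      _ = A ^ ((2*(j^2+3*m*j+j+3*m^2+2*m)+3*j+2*m+3)) * B ^ (2*(j^2+3*m*j+j+3*m^2+2*m)+3*j+4*m+3) * C ^ (2*(j^2+3*m*j+j+3*m^2+2*m)+j+1) * D ^ (2*n^2-n) * E ^ (2*n^2+n) * (x 2 * x 4) := by
          rw [comb A hA _ _ _ (show ((j^2+3*m*j+j+3*m^2+2*m)+j+1) + ((j^2+3*m*j+j+3*m^2+2*m)+2*j+2*m+2) = (2*(j^2+3*m*j+j+3*m^2+2*m)+3*j+2*m+3) by ring),
            comb B hB _ _ _ (show ((j^2+3*m*j+j+3*m^2+2*m)+j+m+1) + ((j^2+3*m*j+j+3*m^2+2*m)+2*j+3*m+2) = (2*(j^2+3*m*j+j+3*m^2+2*m)+3*j+4*m+3) by ring),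
            comb C hC _ _ _ (show ((j^2+3*m*j+j+3*m^2+2*m)-m) + ((j^2+3*m*j+j+3*m^2+2*m)+j+m+1) = (2*(j^2+3*m*j+j+3*m^2+2*m)+j+1) by ring),
            comb D hD _ _ _ (show (n^2-n) + (n^2) = (2*n^2-n) by ring),
            comb E hE _ _ _ (show (n^2) + (n^2+n) = (2*n^2+n) by ring)]
      _ = A ^ (2*(j^2+3*m*j+j+3*m^2+2*m)+3*j+2*m+3) * B ^ (2*(j^2+3*m*j+j+3*m^2+2*m)+3*j+4*m+3) * C ^ (2*(j^2+3*m*j+j+3*m^2+2*m)+j+1) * D ^ (2*n^2-n) * E ^ (2*n^2+n) * (x 2 * x 4) := by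
          ring
  have hR2 : x 3 * A ^ ((j^2+3*m*j+j+3*m^2+2*m)+j+1) * B ^ ((j^2+3*m*j+j+3*m^2+2*m)+j+m+1) * C ^ ((j^2+3*m*j+j+3*m^2+2*m)-m) * D ^ (n^2) * E ^ (n^2+n) * (x 5 * A ^ ((j^2+3*m*j+j+3*m^2+2*m)+2*j+2*m+2) * B ^ ((j^2+3*m*j+j+3*m^2+2*m)+2*j+3*m+2) * C ^ ((j^2+3*m*j+j+3*m^2+2*m)+j+m+1) * D ^ (n^2-n) * E ^ (n^2)) = A ^ (2*(j^2+3*m*j+j+3*m^2+2*m)+3*j+2*m+3) * B ^ (2*(j^2+3*m*j+j+3*m^2+2*m)+3*j+4*m+3) * C ^ (2*(j^2+3*m*j+j+3*m^2+2*m)+j+1) * D ^ (2*n^2-n) * E ^ (2*n^2+n) * (x 3 * x 5) := by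
    calc x 3 * A ^ ((j^2+3*m*j+j+3*m^2+2*m)+j+1) * B ^ ((j^2+3*m*j+j+3*m^2+2*m)+j+m+1) * C ^ ((j^2+3*m*j+j+3*m^2+2*m)-m) * D ^ (n^2) * E ^ (n^2+n) * (x 5 * A ^ ((j^2+3*m*j+j+3*m^2+2*m)+2*j+2*m+2) * B ^ ((j^2+3*m*j+j+3*m^2+2*m)+2*j+3*m+2) * C ^ ((j^2+3*m*j+j+3*m^2+2*m)+j+m+1) * D ^ (n^2-n) * E ^ (n^2))
        = (A ^ ((j^2+3*m*j+j+3*m^2+2*m)+j+1) * A ^ ((j^2+3*m*j+j+3*m^2+2*m)+2*j+2*m+2)) * (B ^ ((j^2+3*m*j+j+3*m^2+2*m)+j+m+1) * B ^ ((j^2+3*m*j+j+3*m^2+2*m)+2*j+3*m+2)) * (C ^ ((j^2+3*m*j+j+3*m^2+2*m)-m) * C ^ ((j^2+3*m*j+j+3*m^2+2*m)+j+m+1)) * (D ^ (n^2) * D ^ (n^2-n)) * (E ^ (n^2+n) * E ^ (n^2)) * (x 3 * x 5) := by ring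
      _ = A ^ ((2*(j^2+3*m*j+j+3*m^2+2*m)+3*j+2*m+3)) * B ^ (2*(j^2+3*m*j+j+3*m^2+2*m)+3*j+4*m+3) * C ^ (2*(j^2+3*m*j+j+3*m^2+2*m)+j+1) * D ^ (2*n^2-n) * E ^ (2*n^2+n) * (x 3 * x 5) := by
          rw [comb A hA _ _ _ (show ((j^2+3*m*j+j+3*m^2+2*m)+j+1) + ((j^2+3*m*j+j+3*m^2+2*m)+2*j+2*m+2) = (2*(j^2+3*m*j+j+3*m^2+2*m)+3*j+2*m+3) by ring),
            comb B hB _ _ _ (show ((j^2+3*m*j+j+3*m^2+2*m)+j+m+1) + ((j^2+3*m*j+j+3*m^2+2*m)+2*j+3*m+2) = (2*(j^2+3*m*j+j+3*m^2+2*m)+3*j+4*m+3) by ring),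
            comb C hC _ _ _ (show ((j^2+3*m*j+j+3*m^2+2*m)-m) + ((j^2+3*m*j+j+3*m^2+2*m)+j+m+1) = (2*(j^2+3*m*j+j+3*m^2+2*m)+j+1) by ring),
            comb D hD _ _ _ (show (n^2) + (n^2-n) = (2*n^2-n) by ring),
            comb E hE _ _ _ (show (n^2+n) + (n^2) = (2*n^2+n) by ring)]
      _ = A ^ (2*(j^2+3*m*j+j+3*m^2+2*m)+3*j+2*m+3) * B ^ (2*(j^2+3*m*j+j+3*m^2+2*m)+3*j+4*m+3) * C ^ (2*(j^2+3*m*j+j+3*m^2+2*m)+j+1) * D ^ (2*n^2-n) * E ^ (2*n^2+n) * (x 3 * x 5) := by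
          ring
  rw [hL, hR1, hR2, ← mul_add, hkey]
end
end

section
/- For all integers i, j, k with i − j ≡ 1 (mod 3) and k even, the following identity holds in F: Z(i,j+1,k+1) · Z(i,j,k−1) = Z(i+1,j,k) · Z(i−1,j+1,k) + Z(i,j,k) · Z(i,j+1,k). -/
noncomputable section

open MvPolynomial

set_option maxHeartbeats 1000000 in
/-- For `i − j ≡ 1 (mod 3)` and `k` even:
`Z(i,j+1,k+1)·Z(i,j,k−1) = Z(i+1,j,k)·Z(i−1,j+1,k) + Z(i,j,k)·Z(i,j+1,k)`. -/
theorem stmt_17 (i j k : ℤ) (h3 : (i - j) % 3 = 1) (h2 : Even k) :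
    Z i (j+1) (k+1) * Z i j (k-1)
      = Z (i+1) j k * Z (i-1) (j+1) k + Z i j k * Z i (j+1) k := by
  obtain ⟨n, hn⟩ := h2
  obtain ⟨t, ht⟩ : ∃ t, i = 3*t + j + 1 := ⟨(i-j-1)/3, by omega⟩
  have hk : k = 2*n := by omega
  subst ht hk
  -- nonzero facts
  have hxne : ∀ r : Fin 6, x r ≠ 0 := by
    intro r
    rw [x, ne_eq, IsFractionRing.to_map_eq_zero_iff]
    exact MvPolynomial.X_ne_zero r
  have hmap : ∀ p : MvPolynomial (Fin 6) ℚ, eval (fun _ => (1:ℚ)) p ≠ 0 →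
      algebraMap (MvPolynomial (Fin 6) ℚ) F p ≠ 0 := by
    intro p hp h
    rw [IsFractionRing.to_map_eq_zero_iff] at h
    exact hp (by simp [h])
  have hA : A ≠ 0 := by
    rw [A]; apply div_ne_zero
    · have h : x 2 * x 4 + x 3 * x 5
          = algebraMap (MvPolynomial (Fin 6) ℚ) F (X 2 * X 4 + X 3 * X 5) := by
        simp [x, map_add, map_mul]
      rw [h]; exact hmap _ (by simp)
    · exact mul_ne_zero (hxne 0) (hxne 1)
  have hB : B ≠ 0 := by
    rw [B]; apply div_ne_zero
    · have h : x 0 * x 5 + x 1 * x 4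
          = algebraMap (MvPolynomial (Fin 6) ℚ) F (X 0 * X 5 + X 1 * X 4) := by
        simp [x, map_add, map_mul]
      rw [h]; exact hmap _ (by simp)
    · exact mul_ne_zero (hxne 2) (hxne 3)
  have hC : _root_.C ≠ 0 := by
    rw [_root_.C]; apply div_ne_zero
    · have h : x 0 * x 2 + x 1 * x 3
          = algebraMap (MvPolynomial (Fin 6) ℚ) F (X 0 * X 2 + X 1 * X 3) := by
        simp [x, map_add, map_mul]
      rw [h]; exact hmap _ (by simp)
    · exact mul_ne_zero (hxne 4) (hxne 5)
  have hD : D ≠ 0 := by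
    rw [D]; apply div_ne_zero
    · have h : x 0 * x 2 * x 5 + x 1 * x 2 * x 4 + x 1 * x 3 * x 5
          = algebraMap (MvPolynomial (Fin 6) ℚ) F
            (X 0 * X 2 * X 5 + X 1 * X 2 * X 4 + X 1 * X 3 * X 5) := by
        simp [x, map_add, map_mul]
      rw [h]; exact hmap _ (by simp; norm_num)
    · exact mul_ne_zero (mul_ne_zero (hxne 0) (hxne 3)) (hxne 4)
  have hE : E ≠ 0 := by
    rw [E]; apply div_ne_zero
    · have h : x 1 * x 3 * x 4 + x 0 * x 2 * x 4 + x 0 * x 3 * x 5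
          = algebraMap (MvPolynomial (Fin 6) ℚ) F
            (X 1 * X 3 * X 4 + X 0 * X 2 * X 4 + X 0 * X 3 * X 5) := by
        simp [x, map_add, map_mul]
      rw [h]; exact hmap _ (by simp; norm_num)
    · exact mul_ne_zero (mul_ne_zero (hxne 1) (hxne 2)) (hxne 5)
  -- abbreviations for the quadratic parts
  obtain ⟨P, hP⟩ : ∃ P : ℤ, P = j*j + 3*t*j + 3*t*t := ⟨_, rfl⟩
  obtain ⟨M, hM⟩ : ∃ M : ℤ, M = n*n := ⟨_, rfl⟩
  have Zval : ∀ (i j k : ℤ) (r : Fin 6) (p q s d e : ℤ),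
      xr i j k = x r → a i j / 3 = p → b i j / 3 = q → c i j / 3 = s →
      (k-1)^2/4 = d → k^2/4 = e →
      Z i j k = x r * A^p * B^q * _root_.C^s * D^d * E^e := by
    intro i j k r p q s d e h1 h2' h3' h4 h5 h6
    rw [Z, h1, h2', h3', h4, h5, h6]
  have hZ1 : Z (3*t+j+1) (j+1) (2*n+1)
      = x 4 * A^(P+3*j+4*t+2) * B^(P+3*j+5*t+2) * _root_.C^(P+2*j+3*t+1) * D^M * E^(M+n) := by
    apply Zval
    · rw [xr, if_neg (by omega), if_neg (by omega), if_neg (by omega),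
        if_neg (by omega), if_pos (by omega)]
    · have h : a (3*t+j+1) (j+1) = 3*(P+3*j+4*t+2) + 1 := by rw [hP]; unfold a; ring
      omega
    · have h : b (3*t+j+1) (j+1) = 3*(P+3*j+5*t+2) + 1 := by rw [hP]; unfold b; ring
      omega
    · have h : c (3*t+j+1) (j+1) = 3*(P+2*j+3*t+1) + 1 := by rw [hP]; unfold c; ring
      omega
    · have h : (2*n+1-1)^2 = 4*M := by rw [hM]; ring
      omega
    · have h : (2*n+1)^2 = 4*(M+n) + 1 := by rw [hM]; ring
      omega
  have hZ2 : Z (3*t+j+1) j (2*n-1)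
      = x 0 * A^(P+2*j+3*t+1) * B^(P+2*j+4*t+1) * _root_.C^(P+j+2*t) * D^(M-2*n+1) * E^(M-n) := by
    apply Zval
    · rw [xr, if_pos (by omega)]
    · have h : a (3*t+j+1) j = 3*(P+2*j+3*t+1) := by rw [hP]; unfold a; ring
      omega
    · have h : b (3*t+j+1) j = 3*(P+2*j+4*t+1) + 1 := by rw [hP]; unfold b; ring
      omega
    · have h : c (3*t+j+1) j = 3*(P+j+2*t) + 2 := by rw [hP]; unfold c; ring
      omega
    · have h : (2*n-1-1)^2 = 4*(M-2*n+1) := by rw [hM]; ring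
      omega
    · have h : (2*n-1)^2 = 4*(M-n) + 1 := by rw [hM]; ring
      omega
  have hZ3 : Z (3*t+j+1+1) j (2*n)
      = x 2 * A^(P+3*j+5*t+2) * B^(P+3*j+6*t+3) * _root_.C^(P+2*j+4*t+1) * D^(M-n) * E^M := by
    apply Zval
    · rw [xr, if_neg (by omega), if_neg (by omega), if_pos (by omega)]
    · have h : a (3*t+j+1+1) j = 3*(P+3*j+5*t+2) + 1 := by rw [hP]; unfold a; ring
      omega
    · have h : b (3*t+j+1+1) j = 3*(P+3*j+6*t+3) := by rw [hP]; unfold b; ring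
      omega
    · have h : c (3*t+j+1+1) j = 3*(P+2*j+4*t+1) + 2 := by rw [hP]; unfold c; ring
      omega
    · have h : (2*n-1)^2 = 4*(M-n) + 1 := by rw [hM]; ring
      omega
    · have h : (2*n)^2 = 4*M := by rw [hM]; ring
      omega
  have hZ4 : Z (3*t+j+1-1) (j+1) (2*n)
      = x 2 * A^(P+2*j+2*t+1) * B^(P+2*j+3*t+1) * _root_.C^(P+j+t) * D^(M-n) * E^M := by
    apply Zval
    · rw [xr, if_neg (by omega), if_neg (by omega), if_pos (by omega)]
    · have h : a (3*t+j+1-1) (j+1) = 3*(P+2*j+2*t+1) + 1 := by rw [hP]; unfold a; ring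
      omega
    · have h : b (3*t+j+1-1) (j+1) = 3*(P+2*j+3*t+1) := by rw [hP]; unfold b; ring
      omega
    · have h : c (3*t+j+1-1) (j+1) = 3*(P+j+t) + 2 := by rw [hP]; unfold c; ring
      omega
    · have h : (2*n-1)^2 = 4*(M-n) + 1 := by rw [hM]; ring
      omega
    · have h : (2*n)^2 = 4*M := by rw [hM]; ring
      omega
  have hZ5 : Z (3*t+j+1) j (2*n)
      = x 1 * A^(P+2*j+3*t+1) * B^(P+2*j+4*t+1) * _root_.C^(P+j+2*t) * D^(M-n) * E^M := by
    apply Zval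
    · rw [xr, if_neg (by omega), if_pos (by omega)]
    · have h : a (3*t+j+1) j = 3*(P+2*j+3*t+1) := by rw [hP]; unfold a; ring
      omega
    · have h : b (3*t+j+1) j = 3*(P+2*j+4*t+1) + 1 := by rw [hP]; unfold b; ring
      omega
    · have h : c (3*t+j+1) j = 3*(P+j+2*t) + 2 := by rw [hP]; unfold c; ring
      omega
    · have h : (2*n-1)^2 = 4*(M-n) + 1 := by rw [hM]; ring
      omega
    · have h : (2*n)^2 = 4*M := by rw [hM]; ring
      omega
  have hZ6 : Z (3*t+j+1) (j+1) (2*n)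
      = x 5 * A^(P+3*j+4*t+2) * B^(P+3*j+5*t+2) * _root_.C^(P+2*j+3*t+1) * D^(M-n) * E^M := by
    apply Zval
    · rw [xr, if_neg (by omega), if_neg (by omega), if_neg (by omega),
        if_neg (by omega), if_neg (by omega)]
    · have h : a (3*t+j+1) (j+1) = 3*(P+3*j+4*t+2) + 1 := by rw [hP]; unfold a; ring
      omega
    · have h : b (3*t+j+1) (j+1) = 3*(P+3*j+5*t+2) + 1 := by rw [hP]; unfold b; ring
      omega
    · have h : c (3*t+j+1) (j+1) = 3*(P+2*j+3*t+1) + 1 := by rw [hP]; unfold c; ring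
      omega
    · have h : (2*n-1)^2 = 4*(M-n) + 1 := by rw [hM]; ring
      omega
    · have h : (2*n)^2 = 4*M := by rw [hM]; ring
      omega
  rw [hZ1, hZ2, hZ3, hZ4, hZ5, hZ6]
  have expand : ∀ (u v : F) (p1 q1 s1 d1 e1 p2 q2 s2 d2 e2 : ℤ),
      (u * A^p1 * B^q1 * _root_.C^s1 * D^d1 * E^e1) * (v * A^p2 * B^q2 * _root_.C^s2 * D^d2 * E^e2)
      = (u * v) * A^(p1+p2) * B^(q1+q2) * _root_.C^(s1+s2) * D^(d1+d2) * E^(e1+e2) := by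
    intro u v p1 q1 s1 d1 e1 p2 q2 s2 d2 e2
    rw [zpow_add₀ hA, zpow_add₀ hB, zpow_add₀ hC, zpow_add₀ hD, zpow_add₀ hE]
    ring
  rw [expand, expand, expand]
  rw [show (P+3*j+4*t+2)+(P+2*j+3*t+1) = 2*P+5*j+7*t+3 by ring,
      show (P+3*j+5*t+2)+(P+2*j+4*t+1) = 2*P+5*j+9*t+3 by ring,
      show (P+2*j+3*t+1)+(P+j+2*t) = 2*P+3*j+5*t+1 by ring,
      show M+(M-2*n+1) = (2*M-2*n)+1 by ring,
      show (M+n)+(M-n) = 2*M by ring,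
      show (P+3*j+5*t+2)+(P+2*j+2*t+1) = 2*P+5*j+7*t+3 by ring,
      show (P+3*j+6*t+3)+(P+2*j+3*t+1) = (2*P+5*j+9*t+3)+1 by ring,
      show (P+2*j+4*t+1)+(P+j+t) = 2*P+3*j+5*t+1 by ring,
      show (M-n)+(M-n) = 2*M-2*n by ring,
      show M+M = 2*M by ring,
      show (P+2*j+3*t+1)+(P+3*j+4*t+2) = 2*P+5*j+7*t+3 by ring,
      show (P+2*j+4*t+1)+(P+3*j+5*t+2) = 2*P+5*j+9*t+3 by ring,
      show (P+j+2*t)+(P+2*j+3*t+1) = 2*P+3*j+5*t+1 by ring,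
      zpow_add_one₀ hD (2*M-2*n), zpow_add_one₀ hB (2*P+5*j+9*t+3)]
  have core : x 4 * x 0 * D = x 2 * x 2 * B + x 1 * x 5 := by
    have e0 := hxne 0
    have e2 := hxne 2
    have e3 := hxne 3
    have e4 := hxne 4
    rw [D, B]
    field_simp
  linear_combination (A^(2*P+5*j+7*t+3) * B^(2*P+5*j+9*t+3) * _root_.C^(2*P+3*j+5*t+1)
    * D^(2*M-2*n) * E^(2*M)) * core
end
end
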